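/- The Lodha–Moore group G is generated by its semi-deferred subgroup G(1) together with the element x_∅; moreover x_∅^{-1} G(1) x_∅ ⊆ G(11), so x_∅^{-1} G(1) x_∅ is a proper subgroup of G(1). Consequently G is a strictly ascending HNN extension of G(1) with stable element x_∅: G ≅ G(1)*_{φ,t} where φ(g) = x_∅^{-1} g x_∅. -/

import Mathlib

namespace LodhaMoore

/-- Infinite binary sequences `2^ℕ`. -/
abbrev Seq : Type := ℕ → Bool

/-- The underlying function of the basic bijection `x`:
`00η ↦ 0η`, `01η ↦ 10η`, `1η ↦ 11η` (reading `false` as `0` and `true` as `1`). -/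
def xFun (ξ : Seq) : Seq := fun n =>
  if ξ 0 then
    match n with
    | 0 => true
    | 1 => true
    | n+2 => ξ (n+1)
  else if ξ 1 then
    match n with
    | 0 => true
    | 1 => false
    | n+2 => ξ (n+2)
  else
    match n with
    | 0 => false
    | n+1 => ξ (n+2)

/-- The inverse of `xFun`: `0η ↦ 00η`, `10η ↦ 01η`, `11η ↦ 1η`. -/
def xInv (ξ : Seq) : Seq := fun n =>
  if ξ 0 then
    if ξ 1 then
      match n with
      | 0 => true
      | n+1 => ξ (n+2)
    else
      match n with
      | 0 => false
      | 1 => true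
      | n+2 => ξ (n+2)
  else
    match n with
    | 0 => false
    | 1 => false
    | n+2 => ξ (n+1)

/-- `yAux true n ξ` is the `n`-th bit of `ξ.y`, and `yAux false n ξ` is the `n`-th bit of
`ξ.y⁻¹`, where `y` is defined by `00η ↦ 0(η.y)`, `01η ↦ 10(η.y⁻¹)`, `1η ↦ 11(η.y)`,
so `y⁻¹` is given by `0η ↦ 00(η.y⁻¹)`, `10η ↦ 01(η.y)`, `11η ↦ 1(η.y⁻¹)`. -/
def yAux : Bool → ℕ → Seq → Bool
  | true, 0, ξ => if ξ 0 then true else if ξ 1 then true else false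
  | true, 1, ξ => if ξ 0 then true else if ξ 1 then false
      else yAux true 0 (fun k => ξ (k+2))
  | true, n+2, ξ =>
      if ξ 0 then yAux true n (fun k => ξ (k+1))
      else if ξ 1 then yAux false n (fun k => ξ (k+2))
      else yAux true (n+1) (fun k => ξ (k+2))
  | false, 0, ξ => if ξ 0 then (if ξ 1 then true else false) else false
  | false, 1, ξ => if ξ 0 then (if ξ 1 then yAux false 0 (fun k => ξ (k+2)) else true)
      else false
  | false, n+2, ξ =>
      if ξ 0 then
        (if ξ 1 then yAux false (n+1) (fun k => ξ (k+2))
         else yAux true n (fun k => ξ (k+2)))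
      else yAux false n (fun k => ξ (k+1))

lemma yAux_inv (n : ℕ) :
    ∀ ξ : Seq, (yAux false n (fun k => yAux true k ξ) = ξ n) ∧
      (yAux true n (fun k => yAux false k ξ) = ξ n) := by
  induction n using Nat.strong_induction_on with
  | _ n IH =>
    intro ξ
    constructor
    · cases h0 : ξ 0 <;> cases h1 : ξ 1 <;> rcases n with _ | _ | n <;>
        simp [yAux, h0, h1]
      · have e : (fun k => yAux true (k+1) ξ) = fun k => yAux true k (fun j => ξ (j+2)) :=
          funext fun k => by cases k <;> simp [yAux, h0, h1]
        rw [e]; exact (IH n (by omega) _).1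
      · exact (IH n (by omega) _).2
      · intro h2 h3; simp_all
      · exact (IH (n+1) (by omega) _).1
      · exact (IH (n+1) (by omega) _).1
    · cases h0 : ξ 0 <;> cases h1 : ξ 1 <;> rcases n with _ | _ | n <;>
        simp [yAux, h0, h1]
      · exact (IH (n+1) (by omega) _).2
      · cases h2 : ξ 2 <;> simp [h2]
      · exact (IH (n+1) (by omega) _).2
      · exact (IH n (by omega) _).1
      · have e : (fun k => yAux false (k+1) ξ) = fun k => yAux false k (fun j => ξ (j+2)) :=
          funext fun k => by cases k <;> simp [yAux, h0, h1]
        rw [e]; exact (IH n (by omega) _).2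

/-- The basic bijection `x` of `2^ℕ`. -/
def xPerm : Equiv.Perm Seq where
  toFun := xFun
  invFun := xInv
  left_inv := by
    intro ξ
    funext n
    cases h0 : ξ 0 <;> cases h1 : ξ 1 <;>
      rcases n with _ | _ | n <;>
      simp [xFun, xInv, h0, h1]
  right_inv := by
    intro ξ
    funext n
    cases h0 : ξ 0 <;> cases h1 : ξ 1 <;>
      rcases n with _ | _ | n <;>
      simp [xFun, xInv, h0, h1]

/-- The basic bijection `y` of `2^ℕ`. -/
def yPerm : Equiv.Perm Seq where
  toFun ξ := fun n => yAux true n ξ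
  invFun ξ := fun n => yAux false n ξ
  left_inv ξ := funext fun n => (yAux_inv n ξ).1
  right_inv ξ := funext fun n => (yAux_inv n ξ).2

/-- Prepend a finite word to an infinite sequence. -/
def append (s : List Bool) (ξ : Seq) : Seq := fun n =>
  if h : n < s.length then s.get ⟨n, h⟩ else ξ (n - s.length)

/-- Drop the first `k` letters of an infinite sequence. -/
def dropN (k : ℕ) (ξ : Seq) : Seq := fun n => ξ (n + k)

/-- `hasPrefix s ξ` iff the finite word `s` is a prefix of `ξ`. -/
def hasPrefix (s : List Bool) (ξ : Seq) : Prop := ∀ i : Fin s.length, ξ i = s.get i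

instance (s : List Bool) (ξ : Seq) : Decidable (hasPrefix s ξ) := by
  unfold hasPrefix; infer_instance

lemma hasPrefix_append (s : List Bool) (ξ : Seq) : hasPrefix s (append s ξ) := by
  intro i
  simp [append, i.isLt]

lemma dropN_append (s : List Bool) (ξ : Seq) : dropN s.length (append s ξ) = ξ := by
  funext n
  simp [dropN, append, Nat.not_lt.2 (Nat.le_add_left _ _)]

lemma append_dropN {s : List Bool} {ξ : Seq} (h : hasPrefix s ξ) :
    append s (dropN s.length ξ) = ξ := by
  funext n
  by_cases h' : n < s.length
  · simpa [append, h'] using (h ⟨n, h'⟩).symm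
  · simp [append, h', dropN, Nat.sub_add_cancel (Nat.le_of_not_lt h')]

/-- The bijection of `2^ℕ` acting as the bijection `f` "at the address `s`":
`sη ↦ s(η.f)`, and `ξ ↦ ξ` if `s` is not a prefix of `ξ`. -/
def localize (s : List Bool) (f : Equiv.Perm Seq) : Equiv.Perm Seq where
  toFun ξ := if hasPrefix s ξ then append s (f (dropN s.length ξ)) else ξ
  invFun ξ := if hasPrefix s ξ then append s (f.symm (dropN s.length ξ)) else ξ
  left_inv := by
    intro ξ
    by_cases h : hasPrefix s ξ
    · simp [h, hasPrefix_append, dropN_append, append_dropN h]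
    · simp [h]
  right_inv := by
    intro ξ
    by_cases h : hasPrefix s ξ
    · simp [h, hasPrefix_append, dropN_append, append_dropN h]
    · simp [h]

/-- The group of bijections of `2^ℕ`.  Composition is written so that in a product `g * h`
the factor `g` acts first: bijections act on the right, as in Lodha--Moore's paper. -/
abbrev M : Type := (Equiv.Perm Seq)ᵐᵒᵖ

/-- The generator `x_s`, `s ∈ 2^{<ℕ}` (a finite binary sequence, i.e. a `List Bool`). -/
def px (s : List Bool) : M := MulOpposite.op (localize s xPerm)

/-- The generator `y_s`, `s ∈ 2^{<ℕ}`. -/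
def py (s : List Bool) : M := MulOpposite.op (localize s yPerm)

/-- `t` is a word of the form `0^n`, `n ≥ 0`. -/
def allFalse (t : List Bool) : Prop := ∀ b ∈ t, b = false

/-- `t` is a word of the form `1^n`, `n ≥ 0`. -/
def allTrue (t : List Bool) : Prop := ∀ b ∈ t, b = true

instance (t : List Bool) : Decidable (allFalse t) := by unfold allFalse; infer_instance
instance (t : List Bool) : Decidable (allTrue t) := by unfold allTrue; infer_instance

/-- Addresses allowed for the `y`-generators of the Lodha–Moore group `G`. -/
def gSet : Set (List Bool) := {t | ¬ allFalse t ∧ ¬ allTrue t}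
/-- Addresses allowed for the `y`-generators of the Lodha–Moore group `G_y`. -/
def gySet : Set (List Bool) := {t | ¬ allFalse t}
/-- Addresses allowed for the `y`-generators of the Lodha–Moore group `yG`. -/
def ygSet : Set (List Bool) := {t | ¬ allTrue t}
/-- Addresses allowed for the `y`-generators of the Lodha–Moore group `yGy`. -/
def ygySet : Set (List Bool) := Set.univ

/-- The Lodha–Moore style group with `y`-generators allowed at the addresses in `A`. -/
def LM (A : Set (List Bool)) : Subgroup M :=
  Subgroup.closure (Set.range px ∪ py '' A)

/-- The Lodha–Moore group `G`. -/
def G : Subgroup M := LM gSet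
/-- The Lodha–Moore group `G_y`. -/
def Gy : Subgroup M := LM gySet
/-- The Lodha–Moore group `yG`. -/
def yG : Subgroup M := LM ygSet
/-- The Lodha–Moore group `yGy`. -/
def yGy : Subgroup M := LM ygySet

/-- The semi-deferred subgroup `H(s)` of the Lodha–Moore group `H = LM A`: the subgroup
generated by those generators of `H` whose address has `s` as a prefix. -/
def LMdef (A : Set (List Bool)) (s : List Bool) : Subgroup M :=
  Subgroup.closure ((px '' {t | s <+: t}) ∪ (py '' {t | t ∈ A ∧ s <+: t}))

lemma px_mem (A : Set (List Bool)) (s : List Bool) : px s ∈ LM A :=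
  Subgroup.subset_closure (Or.inl ⟨s, rfl⟩)

lemma py_mem {A : Set (List Bool)} {s : List Bool} (h : s ∈ A) : py s ∈ LM A :=
  Subgroup.subset_closure (Or.inr ⟨s, h, rfl⟩)

lemma px_mem_def (A : Set (List Bool)) {s t : List Bool} (h : s <+: t) :
    px t ∈ LMdef A s :=
  Subgroup.subset_closure (Or.inl ⟨t, h, rfl⟩)

lemma py_mem_def {A : Set (List Bool)} {s t : List Bool} (h1 : t ∈ A) (h2 : s <+: t) :
    py t ∈ LMdef A s :=
  Subgroup.subset_closure (Or.inr ⟨t, ⟨h1, h2⟩, rfl⟩)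

/-- The conjugate subgroup `z B z⁻¹`. -/
def conjSubgroup {H : Type*} [Group H] (z : H) (B : Subgroup H) : Subgroup H :=
  B.map (MulAut.conj z).toMonoidHom

/-- The `MulEquiv` `φ.range ≃* ⊤` used to define an ascending HNN extension. -/
noncomputable def ascEquiv {B : Type*} [Group B] (φ : B →* B) (hφ : Function.Injective φ) :
    (φ.range : Subgroup B) ≃* (⊤ : Subgroup B) :=
  (MonoidHom.ofInjective hφ).symm.trans Subgroup.topEquiv.symm

/-- The ascending HNN extension `B*_{φ,t} = ⟨B, t ∣ t⁻¹ b t = φ(b) for all b ∈ B⟩` of the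
group `B` along the injective endomorphism `φ`.  (In `HNNExtension B φ.range ⊤ (ascEquiv φ hφ)`
the defining relation is exactly `t⁻¹ * of b * t = of (φ b)` for all `b : B`.) -/
noncomputable abbrev AscHNN {B : Type*} [Group B] (φ : B →* B)
    (hφ : Function.Injective φ) : Type _ :=
  HNNExtension B φ.range ⊤ (ascEquiv φ hφ)

/-!
Conjugation by `x_∅` relocates the generators along the prefix substitutions performed by `x`:
`x_∅⁻¹ g_{1s} x_∅ = g_{11s}`, `x_∅ g_{0s} x_∅⁻¹ = g_{00s}` and `x_∅ g_{10s} x_∅⁻¹ = g_{01s}`, for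
`g = x` and `g = y` alike. The first identity gives `x_∅⁻¹ G(1) x_∅ ⊆ G(11)`, which misses `x_1`;
the other two, together with `x_0 = x_∅² x_1⁻¹ x_∅⁻¹`, produce every generator of `G` from
`G(1)` and `x_∅`.

Every element of an ascending HNN extension `B*_{φ,t}` has the form `tⁿ b t⁻ᵐ`. Elements of `G(1)`
fix every sequence outside the cone `1`, while no positive power of `x_∅` does; hence
`x_∅ⁿ b x_∅⁻ᵐ = 1` forces `n = m` and `b = 1`, and the map `t ↦ x_∅` is injective.
-/

lemma _root_.Subgroup.eq_zero_of_zpow_mem {H : Type*} [Group H] {S : Subgroup H} {z : H}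
    (hz : ∀ n : ℕ, z ^ (n + 1) ∉ S) {k : ℤ} (hk : z ^ k ∈ S) : k = 0 := by
  obtain ⟨n, rfl | rfl⟩ := Int.eq_nat_or_neg k <;> rcases n with _ | n
  · rfl
  · exact absurd (by simpa only [zpow_natCast] using hk) (hz n)
  · rfl
  · exact absurd (by simpa only [zpow_neg, zpow_natCast, inv_mem_iff] using hk) (hz n)

namespace AscHNN

open HNNExtension

section

variable {B : Type*} [Group B] {φ : B →* B} {hφ : Function.Injective φ}

lemma apply_ascEquiv (a : φ.range) : φ (ascEquiv φ hφ a : B) = a :=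
  MonoidHom.apply_ofInjective_symm hφ a

lemma of_mul_t (b : B) : (of b : AscHNN φ hφ) * t = t * of (φ b) :=
  HNNExtension.of_mul_t (⟨b, trivial⟩ : (⊤ : Subgroup B))

lemma of_mul_t_pow (b : B) (n : ℕ) :
    (of b : AscHNN φ hφ) * t ^ n = t ^ n * of (φ^[n] b) := by
  induction n generalizing b with
  | zero => simp
  | succ n ih =>
    rw [pow_succ', ← mul_assoc, of_mul_t, mul_assoc, ih, ← mul_assoc, ← pow_succ',
      Function.iterate_succ_apply]

lemma inv_t_pow_mul_of (b : B) (n : ℕ) :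
    ((t : AscHNN φ hφ) ^ n)⁻¹ * of b = of (φ^[n] b) * (t ^ n)⁻¹ := by
  rw [inv_mul_eq_iff_eq_mul, ← mul_assoc, ← of_mul_t_pow, mul_inv_cancel_right]

lemma exists_eq_t_pow_mul_of_mul_inv_t_pow (w : AscHNN φ hφ) :
    ∃ (n m : ℕ) (b : B), w = t ^ n * of b * (t ^ m)⁻¹ := by
  induction w using HNNExtension.induction_on with
  | of b => exact ⟨0, 0, b, by simp⟩
  | t => exact ⟨1, 0, 1, by simp⟩
  | inv w ih =>
    obtain ⟨n, m, b, rfl⟩ := ih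
    exact ⟨m, n, b⁻¹, by simp [mul_assoc]⟩
  | mul w w' ih ih' =>
    obtain ⟨n, m, b, rfl⟩ := ih
    obtain ⟨n', m', b', rfl⟩ := ih'
    rcases le_total m n' with h | h
    · obtain ⟨k, rfl⟩ := Nat.exists_eq_add_of_le h
      refine ⟨n + k, m', φ^[k] b * b', ?_⟩
      simp only [pow_add, map_mul, mul_assoc, inv_mul_cancel_left]
      rw [← mul_assoc (of b), of_mul_t_pow, mul_assoc]
    · obtain ⟨k, rfl⟩ := Nat.exists_eq_add_of_le h
      refine ⟨n, m' + k, b * φ^[k] b', ?_⟩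
      simp only [pow_add, map_mul, mul_inv_rev, mul_assoc, inv_mul_cancel_left]
      rw [← mul_assoc _ (of b'), inv_t_pow_mul_of, mul_assoc]

variable {H : Type*} [Group H] {f : B →* H} {z : H}

lemma lift_compat (hf : ∀ b, f (φ b) = z⁻¹ * f b * z) (a : φ.range) :
    z * f a = f (ascEquiv φ hφ a : B) * z := by
  rw [← apply_ascEquiv (hφ := hφ) a, hf]
  group

lemma lift_injective (hf : ∀ b, f (φ b) = z⁻¹ * f b * z) (hfinj : Function.Injective f)
    (hz : ∀ n : ℕ, z ^ (n + 1) ∉ f.range) :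
    Function.Injective (lift f z (lift_compat (hφ := hφ) hf)) := by
  rw [injective_iff_map_eq_one]
  intro w hw
  obtain ⟨n, m, b, rfl⟩ := exists_eq_t_pow_mul_of_mul_inv_t_pow w
  simp only [map_mul, map_pow, map_inv, lift_of, lift_t] at hw
  have hfb : f b = z ^ ((m : ℤ) - n) := by
    rw [mul_inv_eq_one, ← eq_inv_mul_iff_mul_eq] at hw
    rw [hw, ← zpow_natCast, ← zpow_natCast, ← zpow_neg, ← zpow_add, neg_add_eq_sub]
  have hmn : (m : ℤ) - n = 0 := Subgroup.eq_zero_of_zpow_mem hz ⟨b, hfb⟩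
  obtain rfl : m = n := by omega
  obtain rfl : b = 1 := hfinj (by simpa using hfb)
  simp

lemma range_lift (hf : ∀ b, f (φ b) = z⁻¹ * f b * z) :
    (lift f z (lift_compat (hφ := hφ) hf)).range = Subgroup.closure (Set.range f ∪ {z}) := by
  apply le_antisymm
  · rintro _ ⟨w, rfl⟩
    induction w using HNNExtension.induction_on with
    | of b => exact Subgroup.subset_closure (Or.inl ⟨b, (lift_of _ _ _ b).symm⟩)
    | t => exact Subgroup.subset_closure (Or.inr (lift_t _ _ _))
    | mul w w' ih ih' => rw [map_mul]; exact mul_mem ih ih'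
    | inv w ih => rw [map_inv]; exact inv_mem ih
  · rw [Subgroup.closure_le]
    rintro _ (⟨b, rfl⟩ | rfl)
    · exact ⟨of b, lift_of _ _ _ b⟩
    · exact ⟨t, lift_t _ _ _⟩

end

theorem exists_mulEquiv_of_closure_eq {H : Type*} [Group H] {B K : Subgroup H} {z : H}
    (φ : B →* B) (hφ : ∀ b, (φ b : H) = z⁻¹ * b * z) (hinj : Function.Injective φ)
    (hz : ∀ n : ℕ, z ^ (n + 1) ∉ B) (hK : Subgroup.closure (B ∪ {z}) = K) :
    ∃ Φ : AscHNN φ hinj ≃* K, (∀ b, (Φ (of b) : H) = b) ∧ (Φ t : H) = z := by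
  have hf : ∀ b, B.subtype (φ b) = z⁻¹ * B.subtype b * z := hφ
  have hrange : (lift B.subtype z (lift_compat (hφ := hinj) hf)).range = K := by
    rw [range_lift hf, Subgroup.coe_subtype, Subtype.range_coe, hK]
  have hψ := lift_injective (hφ := hinj) hf B.subtype_injective
    (by rwa [Subgroup.range_subtype])
  exact ⟨(MonoidHom.ofInjective hψ).trans (MulEquiv.subgroupCongr hrange),
    fun b => by simp [MonoidHom.ofInjective_apply], by simp [MonoidHom.ofInjective_apply]⟩

end AscHNN

def cons (b : Bool) (ξ : Seq) : Seq
  | 0 => b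
  | n + 1 => ξ n

@[simp] lemma cons_zero (b : Bool) (ξ : Seq) : cons b ξ 0 = b := rfl

@[simp] lemma cons_succ (b : Bool) (ξ : Seq) (n : ℕ) : cons b ξ (n + 1) = ξ n := rfl

lemma cons_zero_dropN_one (ξ : Seq) : cons (ξ 0) (dropN 1 ξ) = ξ := by
  funext n; cases n <;> rfl

lemma append_nil (ξ : Seq) : append [] ξ = ξ := by
  funext n; simp [append]

lemma append_cons (b : Bool) (s : List Bool) (ξ : Seq) :
    append (b :: s) ξ = cons b (append s ξ) := by
  funext n
  rcases n with _ | n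
  · rfl
  · by_cases h : n < s.length <;> simp [append, h]

lemma localize_apply_append (s : List Bool) (f : Equiv.Perm Seq) (η : Seq) :
    localize s f (append s η) = append s (f η) := by
  simp [localize, hasPrefix_append, dropN_append]

lemma localize_apply_of_not_hasPrefix {s : List Bool} {ξ : Seq} (h : ¬ hasPrefix s ξ)
    (f : Equiv.Perm Seq) : localize s f ξ = ξ := by
  simp [localize, h]

lemma localize_nil (f : Equiv.Perm Seq) : localize [] f = f :=
  Equiv.ext fun ξ => by simpa [append_nil] using localize_apply_append [] f ξ

lemma localize_singleton_apply_cons (b c : Bool) (f : Equiv.Perm Seq) (ξ : Seq) :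
    localize [b] f (cons c ξ) = if c = b then cons c (f ξ) else cons c ξ := by
  split_ifs with h
  · subst h
    simpa [append_cons, append_nil] using localize_apply_append [c] f ξ
  · exact localize_apply_of_not_hasPrefix (fun hp => h (hp ⟨0, by simp⟩)) f

lemma localize_conj {h : Equiv.Perm Seq} {s s' : List Bool}
    (hh : ∀ η, h (append s η) = append s' η) (f : Equiv.Perm Seq) :
    h * localize s f * h⁻¹ = localize s' f := by
  ext1 ξ
  simp only [Equiv.Perm.mul_apply]
  by_cases hξ : hasPrefix s' ξ
  · rw [← append_dropN hξ, Equiv.Perm.inv_eq_iff_eq.2 (hh _).symm, localize_apply_append,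
      localize_apply_append, hh]
  · have hinv : h (h⁻¹ ξ) = ξ := h.apply_symm_apply ξ
    have hξ' : ¬ hasPrefix s (h⁻¹ ξ) := fun hp => hξ <| by
      rw [← hinv, ← append_dropN hp, hh]
      exact hasPrefix_append _ _
    rw [localize_apply_of_not_hasPrefix hξ', hinv, localize_apply_of_not_hasPrefix hξ]

lemma xPerm_apply_zero (ξ : Seq) : xPerm ξ 0 = (ξ 0 || ξ 1) := by
  show xFun ξ 0 = _
  cases h0 : ξ 0 <;> cases h1 : ξ 1 <;> simp [xFun, h0, h1]

lemma xPerm_cons_true (ξ : Seq) : xPerm (cons true ξ) = cons true (cons true ξ) := by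
  funext n; rcases n with _ | _ | n <;> rfl

lemma xPerm_cons_false_false (ξ : Seq) : xPerm (cons false (cons false ξ)) = cons false ξ := by
  funext n; rcases n with _ | _ | n <;> rfl

lemma xPerm_cons_false_true (ξ : Seq) :
    xPerm (cons false (cons true ξ)) = cons true (cons false ξ) := by
  funext n; rcases n with _ | _ | n <;> rfl

lemma xPerm_append_true_cons (s : List Bool) (η : Seq) :
    xPerm (append (true :: s) η) = append (true :: true :: s) η := by
  simp only [append_cons, xPerm_cons_true]

lemma xPerm_inv_append_false_cons (s : List Bool) (η : Seq) :
    xPerm⁻¹ (append (false :: s) η) = append (false :: false :: s) η := by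
  rw [Equiv.Perm.inv_eq_iff_eq]
  simp only [append_cons, xPerm_cons_false_false]

lemma xPerm_inv_append_true_false_cons (s : List Bool) (η : Seq) :
    xPerm⁻¹ (append (true :: false :: s) η) = append (false :: true :: s) η := by
  rw [Equiv.Perm.inv_eq_iff_eq]
  simp only [append_cons, xPerm_cons_false_true]

open MulOpposite

lemma px_nil : px [] = op xPerm := by
  rw [px, localize_nil]

lemma op_localize_conj {h : Equiv.Perm Seq} {s s' : List Bool}
    (hh : ∀ η, h (append s η) = append s' η) (f : Equiv.Perm Seq) :
    (op h)⁻¹ * op (localize s f) * op h = op (localize s' f) := by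
  rw [← localize_conj hh f]
  simp only [op_mul, op_inv, mul_assoc]

lemma conj_px_nil_inv_localize_true_cons (s : List Bool) (f : Equiv.Perm Seq) :
    (px [])⁻¹ * op (localize (true :: s) f) * px [] = op (localize (true :: true :: s) f) := by
  rw [px_nil]
  exact op_localize_conj (xPerm_append_true_cons s) f

lemma conj_px_nil_localize_false_cons (s : List Bool) (f : Equiv.Perm Seq) :
    px [] * op (localize (false :: s) f) * (px [])⁻¹ =
      op (localize (false :: false :: s) f) := by
  simpa only [op_inv, inv_inv, ← px_nil] using
    op_localize_conj (xPerm_inv_append_false_cons s) f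

lemma conj_px_nil_localize_true_false_cons (s : List Bool) (f : Equiv.Perm Seq) :
    px [] * op (localize (true :: false :: s) f) * (px [])⁻¹ =
      op (localize (false :: true :: s) f) := by
  simpa only [op_inv, inv_inv, ← px_nil] using
    op_localize_conj (xPerm_inv_append_true_false_cons s) f

lemma px_nil_mul_px_nil : px [] * px [] = px [false] * px [] * px [true] := by
  rw [px_nil, px, px, ← op_mul, ← op_mul, ← op_mul]
  congr 1
  ext1 ξ
  rw [← cons_zero_dropN_one ξ, ← cons_zero_dropN_one (dropN 1 ξ),
    ← cons_zero_dropN_one (dropN 1 (dropN 1 ξ))]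
  generalize ξ 0 = b₀, dropN 1 ξ 0 = b₁, dropN 1 (dropN 1 ξ) 0 = b₂,
    dropN 1 (dropN 1 (dropN 1 ξ)) = η
  cases b₀ <;> cases b₁ <;> cases b₂ <;>
    simp [localize_singleton_apply_cons, xPerm_cons_true, xPerm_cons_false_false,
      xPerm_cons_false_true]

def fixingOutside (s : List Bool) : Subgroup M :=
  (fixingSubgroup (Equiv.Perm Seq) {ξ | ¬ hasPrefix s ξ}).op

lemma mem_fixingOutside {s : List Bool} {g : M} :
    g ∈ fixingOutside s ↔ ∀ ξ, ¬ hasPrefix s ξ → g.unop ξ = ξ := by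
  simp [fixingOutside, mem_fixingSubgroup_iff, Equiv.Perm.smul_def]

lemma hasPrefix.of_prefix {s t : List Bool} {ξ : Seq} (ht : hasPrefix t ξ) (h : s <+: t) :
    hasPrefix s ξ := by
  obtain ⟨u, rfl⟩ := h
  intro i
  simpa [List.getElem_append_left i.isLt] using ht ⟨i, by simp; omega⟩

lemma op_localize_mem_fixingOutside {s t : List Bool} (h : s <+: t) (f : Equiv.Perm Seq) :
    op (localize t f) ∈ fixingOutside s :=
  mem_fixingOutside.2 fun _ hξ =>
    localize_apply_of_not_hasPrefix (fun ht => hξ (ht.of_prefix h)) f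

lemma LMdef_le_fixingOutside (A : Set (List Bool)) (s : List Bool) :
    LMdef A s ≤ fixingOutside s := by
  rw [LMdef, Subgroup.closure_le]
  rintro _ (⟨t, ht, rfl⟩ | ⟨t, ht, rfl⟩)
  · exact op_localize_mem_fixingOutside ht xPerm
  · exact op_localize_mem_fixingOutside ht.2 yPerm

lemma xPerm_pow_succ_apply_zero {ξ : Seq} (hξ : ξ 1 = true) (n : ℕ) :
    (xPerm ^ (n + 1)) ξ 0 = true := by
  induction n with
  | zero => simp [xPerm_apply_zero, hξ]
  | succ n ih => rw [pow_succ', Equiv.Perm.mul_apply, xPerm_apply_zero, ih, Bool.true_or]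

lemma px_nil_pow_succ_not_mem_fixingOutside (n : ℕ) : px [] ^ (n + 1) ∉ fixingOutside [true] := by
  intro h
  let ξ : Seq := cons false (cons true fun _ => false)
  have hfix := mem_fixingOutside.1 h ξ fun hp => by simpa [ξ] using hp ⟨0, by simp⟩
  rw [px_nil, ← op_pow, unop_op] at hfix
  simpa [hfix, ξ] using xPerm_pow_succ_apply_zero (ξ := ξ) rfl n

lemma px_true_not_mem_fixingOutside : px [true] ∉ fixingOutside [true, true] := by
  intro h
  let ξ : Seq := cons true (cons false (cons true fun _ => false))
  have hfix := mem_fixingOutside.1 h ξ fun hp => by simpa [ξ] using hp ⟨1, by simp⟩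
  have h1 := congrFun hfix 1
  simp [ξ, px, localize_singleton_apply_cons, xPerm_cons_false_true] at h1

lemma LMdef_le_LM (A : Set (List Bool)) (s : List Bool) : LMdef A s ≤ LM A := by
  rw [LMdef, Subgroup.closure_le]
  rintro _ (⟨t, -, rfl⟩ | ⟨t, ht, rfl⟩)
  · exact px_mem A t
  · exact py_mem ht.1

lemma LMdef_le_LMdef_of_prefix (A : Set (List Bool)) {s s' : List Bool} (h : s <+: s') :
    LMdef A s' ≤ LMdef A s := by
  rw [LMdef, Subgroup.closure_le]
  rintro _ (⟨t, ht, rfl⟩ | ⟨t, ht, rfl⟩)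
  · exact px_mem_def A (h.trans ht)
  · exact py_mem_def ht.1 (h.trans ht.2)

lemma nil_not_mem_gSet : [] ∉ gSet := by
  simp [gSet, allFalse]

lemma not_allFalse_of_false_cons_mem_gSet {t : List Bool} (h : false :: t ∈ gSet) :
    ¬ allFalse t := by
  simp_all [gSet, allFalse]

lemma true_false_cons_mem_gSet (u : List Bool) : true :: false :: u ∈ gSet := by
  simp [gSet, allFalse, allTrue]

lemma true_true_cons_mem_gSet {u : List Bool} (h : true :: u ∈ gSet) :
    true :: true :: u ∈ gSet := by
  simp_all [gSet, allFalse, allTrue]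

lemma px_false_mem {K : Subgroup M} (hx : px [] ∈ K) (h1 : px [true] ∈ K) : px [false] ∈ K := by
  have h : px [false] = px [] * px [] * (px [true])⁻¹ * (px [])⁻¹ := by
    rw [px_nil_mul_px_nil]; group
  rw [h]
  exact mul_mem (mul_mem (mul_mem hx hx) (inv_mem h1)) (inv_mem hx)

lemma op_localize_false_cons_mem {K : Subgroup M} (hx : px [] ∈ K) (f : Equiv.Perm Seq)
    (h10 : ∀ u, op (localize (true :: false :: u) f) ∈ K) (s : List Bool)
    (h0 : allFalse s → op (localize [false] f) ∈ K) : op (localize (false :: s) f) ∈ K := by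
  induction s with
  | nil => exact h0 fun _ h => absurd h List.not_mem_nil
  | cons b s ih =>
    cases b
    · rw [← conj_px_nil_localize_false_cons]
      refine mul_mem (mul_mem hx (ih fun hs => h0 ?_)) (inv_mem hx)
      simpa [allFalse] using hs
    · rw [← conj_px_nil_localize_true_false_cons]
      exact mul_mem (mul_mem hx (h10 s)) (inv_mem hx)

lemma closure_LMdef_true_union_px_nil :
    Subgroup.closure ((LMdef gSet [true] : Set M) ∪ {px []}) = G := by
  set K := Subgroup.closure ((LMdef gSet [true] : Set M) ∪ {px []})
  have hx : px [] ∈ K := Subgroup.subset_closure (Or.inr rfl)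
  have hG₁ {g : M} (hg : g ∈ LMdef gSet [true]) : g ∈ K := Subgroup.subset_closure (Or.inl hg)
  apply le_antisymm
  · rw [Subgroup.closure_le]
    rintro _ (hg | rfl)
    · exact LMdef_le_LM gSet [true] hg
    · exact px_mem gSet []
  · rw [G, LM, Subgroup.closure_le]
    rintro _ (⟨s, rfl⟩ | ⟨t, ht, rfl⟩)
    · rcases s with _ | ⟨_ | _, s⟩
      · exact hx
      · exact op_localize_false_cons_mem hx xPerm
          (fun u => hG₁ (px_mem_def gSet (by simp))) s
          (fun _ => px_false_mem hx (hG₁ (px_mem_def gSet (List.prefix_refl _))))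
      · exact hG₁ (px_mem_def gSet (by simp))
    · rcases t with _ | ⟨_ | _, t⟩
      · exact absurd ht nil_not_mem_gSet
      · exact op_localize_false_cons_mem hx yPerm
          (fun u => hG₁ (py_mem_def (true_false_cons_mem_gSet u) (by simp))) t
          (fun h => absurd h (not_allFalse_of_false_cons_mem_gSet ht))
      · exact hG₁ (py_mem_def ht (by simp))

lemma conjSubgroup_px_nil_inv_LMdef_true_le :
    conjSubgroup (px [])⁻¹ (LMdef gSet [true]) ≤ LMdef gSet [true, true] := by
  rw [conjSubgroup, LMdef, MonoidHom.map_closure, Subgroup.closure_le]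
  rintro _ ⟨_, ⟨t, ⟨u, rfl⟩, rfl⟩ | ⟨t, ⟨ht, u, rfl⟩, rfl⟩, rfl⟩
  · simp only [MulEquiv.coe_toMonoidHom, MulAut.conj_apply, inv_inv]
    exact (conj_px_nil_inv_localize_true_cons u xPerm) ▸ px_mem_def gSet ⟨u, rfl⟩
  · simp only [MulEquiv.coe_toMonoidHom, MulAut.conj_apply, inv_inv]
    exact (conj_px_nil_inv_localize_true_cons u yPerm) ▸
      py_mem_def (true_true_cons_mem_gSet ht) ⟨u, rfl⟩

lemma conjSubgroup_px_nil_inv_LMdef_true_lt :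
    conjSubgroup (px [])⁻¹ (LMdef gSet [true]) < LMdef gSet [true] := by
  have hle := conjSubgroup_px_nil_inv_LMdef_true_le
  refine SetLike.lt_iff_le_and_exists.2
    ⟨hle.trans (LMdef_le_LMdef_of_prefix gSet (by simp)), px [true],
      px_mem_def gSet (List.prefix_refl _), fun h => ?_⟩
  exact px_true_not_mem_fixingOutside (LMdef_le_fixingOutside gSet _ (hle h))

/-- `G` is a strictly ascending HNN extension of the semi-deferred subgroup `G(1)` with
stable element `x_∅`: `G` is generated by `G(1)` together with `x_∅`;
`x_∅⁻¹ G(1) x_∅ ⊆ G(11)`, so `x_∅⁻¹ G(1) x_∅` is a proper subgroup of `G(1)`; and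
consequently `G ≅ G(1)*_{φ,t}` where `φ(g) = x_∅⁻¹ g x_∅`, via an isomorphism fixing
`G(1)` pointwise and sending the stable element `t` to `x_∅`. -/
theorem G_is_ascending_hnn_over_G1 :
    Subgroup.closure ((LMdef gSet [true] : Set M) ∪ {px []}) = G ∧
    conjSubgroup (px [])⁻¹ (LMdef gSet [true]) ≤ LMdef gSet [true, true] ∧
    conjSubgroup (px [])⁻¹ (LMdef gSet [true]) < LMdef gSet [true] ∧
    ∀ (φ : ↥(LMdef gSet [true]) →* ↥(LMdef gSet [true]))
      (_ : ∀ b : ↥(LMdef gSet [true]), (φ b : M) = (px [])⁻¹ * (b : M) * px [])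
      (hinj : Function.Injective φ),
      ∃ Φ : AscHNN φ hinj ≃* ↥G,
        (∀ b : ↥(LMdef gSet [true]), (Φ (HNNExtension.of b) : M) = (b : M)) ∧
        (Φ HNNExtension.t : M) = px [] := by
  refine ⟨closure_LMdef_true_union_px_nil, conjSubgroup_px_nil_inv_LMdef_true_le,
    conjSubgroup_px_nil_inv_LMdef_true_lt, fun φ hφ hinj => ?_⟩
  have hz (n : ℕ) : px [] ^ (n + 1) ∉ LMdef gSet [true] := fun h =>
    px_nil_pow_succ_not_mem_fixingOutside n (LMdef_le_fixingOutside gSet [true] h)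
  exact AscHNN.exists_mulEquiv_of_closure_eq φ hφ hinj hz closure_LMdef_true_union_px_nil

end LodhaMoore
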